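/- arXiv:1909.05075 — 4 statements merged into one kernel-verified Lean document; each statement's English description precedes it below -/
import Mathlib

section
/- For every horizon m ≥ 0 and every μ ∈ ℝ, the Gaussian one-armed-bandit value function is nonincreasing in the Bayesian number of observations: if 0 < ñ ≤ n then V_m(μ,n,γ,τ,λ) ≤ V_m(μ,ñ,γ,τ,λ). -/
/-!
By induction on the horizon, each `V_m(·, n)` is Lipschitz and convex: Gaussian smoothing
`μ ↦ ∫ f d𝒩(μ, s)` and the map `g ↦ max (μ - λ + γ g) 0` preserve both properties.
Pushing the predictive law forward along the posterior-mean update turns the recursion into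
`V_{m+1}(μ, n) = max (μ - λ + γ ∫ V_m(·, n + τ) d𝒩(μ, τ / (n (n + τ)))) 0`.
Increasing `n` lowers the integrand (induction hypothesis) and shrinks the variance
`τ / (n (n + τ))`, and Gaussians of a common mean increase in the convex order with their
variance: `𝒩(μ, v)` is a contraction of `𝒩(μ, w)` towards `μ`, so by convexity and the symmetry
of `𝒩(μ, w)` about `μ` a convex `f` has `∫ f d𝒩(μ, v) ≤ ∫ f d𝒩(μ, w)`.
-/

open MeasureTheory ProbabilityTheory

/-- Finite-horizon value function of the Gaussian one-armed bandit:
`V γ τ m μ n λ`, with discount `γ`, observation precision `τ`, horizon `m`,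
posterior state `(μ, n)` and safe-arm reward `λ`. The expectation over the
next observation is taken under the Gaussian predictive distribution
`𝒩(μ, 1/n + 1/τ)`. -/
noncomputable def V (γ τ : ℝ) : ℕ → ℝ → ℝ → ℝ → ℝ
  | 0, μ, _n, lam => max (μ - lam) 0 / (1 - γ)
  | m + 1, μ, n, lam =>
      max (μ - lam + γ * ∫ y, V γ τ m ((n * μ + τ * y) / (n + τ)) (n + τ) lam
        ∂(gaussianReal μ (1 / n + 1 / τ).toNNReal)) 0

open scoped NNReal

section Smoothing

variable {E F : Type*} [NormedAddCommGroup E] [MeasurableSpace E]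
  [NormedAddCommGroup F] {ν : Measure E} {K : ℝ≥0} {f : E → F}

theorem LipschitzWith.integrable_of_integrable_id [IsFiniteMeasure ν] (hf : LipschitzWith K f)
    (hν : Integrable id ν) : Integrable f ν := by
  have hf₀ : LipschitzWith (K + 0) (fun x => f x - f 0) := hf.sub (LipschitzWith.const _)
  have := (hf₀.comp_memLp (sub_self _) (memLp_one_iff_integrable.2 hν)).integrable le_rfl
  simpa [sub_eq_add_neg, integrable_add_const_iff] using this

theorem LipschitzWith.integral_comp_add_right [NormedSpace ℝ F] [IsProbabilityMeasure ν]
    (hf : LipschitzWith K f) (hν : Integrable id ν) :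
    LipschitzWith K (fun a => ∫ x, f (x + a) ∂ν) := by
  have hint a : Integrable (fun x => f (x + a)) ν :=
    (hf.comp (isometry_add_right a).lipschitz).integrable_of_integrable_id hν
  refine LipschitzWith.of_dist_le_mul fun a b => ?_
  rw [dist_eq_norm, ← integral_sub (hint a) (hint b)]
  simpa using norm_integral_le_of_norm_le_const (μ := ν) (C := K * dist a b)
    (ae_of_all _ fun x => by
      simpa [dist_eq_norm] using hf.dist_le_mul (x + a) (x + b))

theorem ConvexOn.integral_comp_add_right [Module ℝ E] {g : E → ℝ} (hg : ConvexOn ℝ Set.univ g)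
    (hint : ∀ a, Integrable (fun x => g (x + a)) ν) :
    ConvexOn ℝ Set.univ (fun a => ∫ x, g (x + a) ∂ν) := by
  refine ⟨convex_univ, fun a _ b _ s t hs ht hst => ?_⟩
  simp only [smul_eq_mul]
  calc ∫ x, g (x + (s • a + t • b)) ∂ν
      ≤ ∫ x, (s * g (x + a) + t * g (x + b)) ∂ν := by
        refine integral_mono (hint _) (((hint a).const_mul s).add ((hint b).const_mul t))
          fun x => ?_
        have hx : x + (s • a + t • b) = s • (x + a) + t • (x + b) := by
          rw [smul_add, smul_add, add_add_add_comm, ← add_smul, hst, one_smul]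
        simpa [hx] using hg.2 (Set.mem_univ (x + a)) (Set.mem_univ (x + b)) hs ht hst
    _ = s * ∫ x, g (x + a) ∂ν + t * ∫ x, g (x + b) ∂ν := by
        rw [integral_add ((hint a).const_mul s) ((hint b).const_mul t),
          integral_const_mul, integral_const_mul]

end Smoothing

namespace ProbabilityTheory

variable {μ : ℝ} {v w : ℝ≥0}

lemma gaussianReal_map_affine (a b : ℝ) :
    (gaussianReal μ v).map (fun x => a * x + b)
      = gaussianReal (a * μ + b) (.mk (a ^ 2) (sq_nonneg a) * v) := by
  rw [show (fun x => a * x + b) = (· + b) ∘ (a * ·) from rfl,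
    ← Measure.map_map (by fun_prop) (by fun_prop), gaussianReal_map_const_mul,
    gaussianReal_map_add_const]

lemma integral_gaussianReal_eq_integral_add_right (f : ℝ → ℝ) :
    ∫ x, f x ∂gaussianReal μ v = ∫ x, f (x + μ) ∂gaussianReal 0 v := by
  rw [← (measurableEmbedding_addRight μ).integral_map, gaussianReal_map_add_const, zero_add]

lemma integral_gaussianReal_comp_affine {a : ℝ} (ha : a ≠ 0) (b : ℝ) (f : ℝ → ℝ) :
    ∫ x, f (a * x + b) ∂gaussianReal μ v
      = ∫ x, f x ∂gaussianReal (a * μ + b) (.mk (a ^ 2) (sq_nonneg a) * v) := by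
  rw [← gaussianReal_map_affine]
  exact (((measurableEmbedding_addRight b).comp (measurableEmbedding_mulLeft₀ ha)).integral_map
    f).symm

theorem _root_.ConvexOn.integral_gaussianReal_le_of_var_le {f : ℝ → ℝ}
    (hf : ConvexOn ℝ Set.univ f) (hfv : Integrable f (gaussianReal μ v))
    (hfw : Integrable f (gaussianReal μ w)) (hvw : v ≤ w) :
    ∫ x, f x ∂gaussianReal μ v ≤ ∫ x, f x ∂gaussianReal μ w := by
  rcases eq_or_ne w 0 with rfl | hw
  · rw [nonpos_iff_eq_zero.1 hvw]
  obtain ⟨c, hc⟩ : ∃ c, c = Real.sqrt (v / w) := ⟨_, rfl⟩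
  have hc0 : 0 ≤ c := hc ▸ Real.sqrt_nonneg _
  have hc1 : c ≤ 1 := hc ▸ Real.sqrt_le_one.2 (div_le_one_of_le₀ (by exact_mod_cast hvw) w.2)
  have hmeas (a b : ℝ) : AEMeasurable (fun x => a * x + b) (gaussianReal μ w) := by fun_prop
  have hcontract : (gaussianReal μ w).map (fun x => c * x + (1 - c) * μ) = gaussianReal μ v := by
    rw [gaussianReal_map_affine]
    congr 1
    · ring
    · ext
      rw [NNReal.coe_mul, NNReal.coe_mk, hc, Real.sq_sqrt (by positivity),
        div_mul_cancel₀ _ (NNReal.coe_ne_zero.2 hw)]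
  have hreflect : (gaussianReal μ w).map (fun x => -1 * x + 2 * μ) = gaussianReal μ w := by
    rw [gaussianReal_map_affine]
    congr 1
    · ring
    · ext; simp
  rw [← hcontract] at hfv ⊢
  rw [integral_map (hmeas _ _) hfv.1]
  have hint : Integrable (fun x => f (c * x + (1 - c) * μ)) (gaussianReal μ w) :=
    (integrable_map_measure hfv.1 (hmeas _ _)).1 hfv
  have hfw' : Integrable f ((gaussianReal μ w).map (fun x => -1 * x + 2 * μ)) := by
    rwa [hreflect]
  have hint' : Integrable (fun x => f (-1 * x + 2 * μ)) (gaussianReal μ w) :=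
    (integrable_map_measure hfw'.1 (hmeas _ _)).1 hfw'
  have hsymm : ∫ x, f (-1 * x + 2 * μ) ∂gaussianReal μ w = ∫ x, f x ∂gaussianReal μ w := by
    rw [← integral_map (hmeas _ _) hfw'.1, hreflect]
  obtain ⟨t, ht⟩ : ∃ t : ℝ, t = (1 + c) / 2 := ⟨_, rfl⟩
  calc ∫ x, f (c * x + (1 - c) * μ) ∂gaussianReal μ w
      ≤ ∫ x, (t * f x + (1 - t) * f (-1 * x + 2 * μ)) ∂gaussianReal μ w := by
        refine integral_mono hint ((hfw.const_mul t).add (hint'.const_mul (1 - t))) fun x => ?_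
        have harg : c * x + (1 - c) * μ = t • x + (1 - t) • (-1 * x + 2 * μ) := by
          simp only [smul_eq_mul, ht]; ring
        rw [harg]
        exact hf.2 (Set.mem_univ _) (Set.mem_univ _) (by linarith) (by linarith) (by ring)
    _ = ∫ x, f x ∂gaussianReal μ w := by
        rw [integral_add (hfw.const_mul t) (hint'.const_mul (1 - t)), integral_const_mul,
          integral_const_mul, hsymm]
        ring

end ProbabilityTheory

/-- The variance of the updated posterior mean `(n μ + τ y) / (n + τ)` under the predictive law
`𝒩(μ, 1/n + 1/τ)` of `y`; it equals `1/n - 1/(n + τ)`. -/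
noncomputable def posteriorMeanVar (τ n : ℝ) : ℝ≥0 := (τ / (n * (n + τ))).toNNReal

lemma posteriorMeanVar_antitoneOn {τ : ℝ} (hτ : 0 ≤ τ) :
    AntitoneOn (posteriorMeanVar τ) (Set.Ioi 0) := fun nt (hnt : 0 < nt) n (hn : 0 < n) hle =>
  Real.toNNReal_le_toNNReal <| div_le_div_of_nonneg_left hτ (by positivity) (by gcongr)

variable {γ τ lam : ℝ}

lemma V_succ_eq (hτ : 0 < τ) (m : ℕ) (μ : ℝ) {n : ℝ} (hn : 0 < n) :
    V γ τ (m + 1) μ n lam = max (μ - lam + γ *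
      ∫ x, V γ τ m x (n + τ) lam ∂gaussianReal μ (posteriorMeanVar τ n)) 0 := by
  have hnτ : n + τ ≠ 0 := by positivity
  have hupdate (y : ℝ) : (n * μ + τ * y) / (n + τ) = τ / (n + τ) * y + n * μ / (n + τ) := by
    field_simp
    ring
  rw [V]
  simp_rw [hupdate]
  rw [integral_gaussianReal_comp_affine (f := fun x => V γ τ m x (n + τ) lam) (by positivity)]
  congr 5
  · field_simp
    ring
  · ext
    simp only [NNReal.coe_mul, NNReal.coe_mk, posteriorMeanVar]
    rw [Real.coe_toNNReal _ (by positivity), Real.coe_toNNReal _ (by positivity)]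
    field_simp
    ring

theorem V_lipschitzWith_and_convexOn (hγ0 : 0 ≤ γ) (hγ1 : γ < 1) (hτ : 0 < τ) (m : ℕ) {n : ℝ}
    (hn : 0 < n) : (∃ K, LipschitzWith K (fun μ => V γ τ m μ n lam)) ∧
      ConvexOn ℝ Set.univ (fun μ => V γ τ m μ n lam) := by
  have hshift : LipschitzWith 1 (fun μ : ℝ => μ - lam) ∧
      ConvexOn ℝ Set.univ (fun μ : ℝ => μ - lam) := by
    refine ⟨?_, (convexOn_id convex_univ).sub (concaveOn_const lam convex_univ)⟩
    simpa using LipschitzWith.id.sub (LipschitzWith.const lam)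
  induction m generalizing n with
  | zero =>
    have hV : (fun μ => V γ τ 0 μ n lam) = fun μ => (1 - γ)⁻¹ • max (μ - lam) 0 :=
      funext fun μ => by rw [V, smul_eq_mul, div_eq_inv_mul]
    rw [hV]
    exact ⟨⟨_, (lipschitzWith_smul (1 - γ)⁻¹).comp (hshift.1.max_const 0)⟩,
      (hshift.2.sup (convexOn_const 0 convex_univ)).smul (inv_nonneg.2 (by linarith))⟩
  | succ m ih =>
    obtain ⟨⟨K, hK⟩, hconv⟩ := ih (n := n + τ) (by positivity)
    set s := posteriorMeanVar τ n
    have hint (a : ℝ) : Integrable (fun x => V γ τ m (x + a) (n + τ) lam) (gaussianReal 0 s) :=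
      (hK.comp (isometry_add_right a).lipschitz).integrable_of_integrable_id
        IsGaussian.integrable_id
    have hV : (fun μ => V γ τ (m + 1) μ n lam)
        = fun μ => max (μ - lam + γ • ∫ x, V γ τ m (x + μ) (n + τ) lam ∂gaussianReal 0 s) 0 := by
      funext μ
      rw [V_succ_eq hτ m μ hn, smul_eq_mul, integral_gaussianReal_eq_integral_add_right]
    rw [hV]
    exact ⟨⟨_, ((hshift.1.add ((lipschitzWith_smul γ).comp
      (hK.integral_comp_add_right IsGaussian.integrable_id))).max_const 0)⟩,
      (hshift.2.add ((hconv.integral_comp_add_right hint).smul hγ0)).sup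
        (convexOn_const 0 convex_univ)⟩

lemma integrable_V (hγ0 : 0 ≤ γ) (hγ1 : γ < 1) (hτ : 0 < τ) (m : ℕ) {n : ℝ} (hn : 0 < n)
    (μ : ℝ) (v : ℝ≥0) : Integrable (fun x => V γ τ m x n lam) (gaussianReal μ v) := by
  obtain ⟨⟨K, hK⟩, -⟩ := V_lipschitzWith_and_convexOn (lam := lam) hγ0 hγ1 hτ m hn
  exact hK.integrable_of_integrable_id IsGaussian.integrable_id

/-- For every horizon `m` and every `μ`, the Gaussian one-armed-bandit value
is nonincreasing in the Bayesian number of observations: if `0 < ñ ≤ n` then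
`V_m(μ,n,γ,τ,λ) ≤ V_m(μ,ñ,γ,τ,λ)`. -/
theorem nmab_value_antitone_in_n (γ τ lam : ℝ)
    (hγ0 : 0 ≤ γ) (hγ1 : γ < 1) (hτ : 0 < τ) :
    ∀ m : ℕ, ∀ μ nt n : ℝ, 0 < nt → nt ≤ n →
      V γ τ m μ n lam ≤ V γ τ m μ nt lam := by
  intro m
  induction m with
  | zero => intro μ nt n _ _; rfl
  | succ m ih =>
    intro μ nt n hnt hle
    have hn : 0 < n := hnt.trans_le hle
    have hntτ : 0 < nt + τ := by positivity
    rw [V_succ_eq hτ m μ hn, V_succ_eq hτ m μ hnt]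
    gcongr max (_ + γ * ?_) _
    calc ∫ x, V γ τ m x (n + τ) lam ∂gaussianReal μ (posteriorMeanVar τ n)
        ≤ ∫ x, V γ τ m x (nt + τ) lam ∂gaussianReal μ (posteriorMeanVar τ n) :=
          integral_mono (integrable_V hγ0 hγ1 hτ m (by positivity) _ _)
            (integrable_V hγ0 hγ1 hτ m hntτ _ _)
            fun x => ih x (nt + τ) (n + τ) hntτ (by linarith)
      _ ≤ ∫ x, V γ τ m x (nt + τ) lam ∂gaussianReal μ (posteriorMeanVar τ nt) :=
          (V_lipschitzWith_and_convexOn hγ0 hγ1 hτ m hntτ).2.integral_gaussianReal_le_of_var_le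
            (integrable_V hγ0 hγ1 hτ m hntτ _ _) (integrable_V hγ0 hγ1 hτ m hntτ _ _)
            (posteriorMeanVar_antitoneOn hτ.le hnt hn hle)
end

section
/- (Proposition 1) For every horizon m ≥ 0, every n > 0 and all μ̃ < μ: if V_m(μ,n,γ,τ,λ) = 0 then V_m(μ̃,n,γ,τ,λ) = 0. -/
open MeasureTheory ProbabilityTheory
open scoped NNReal

def HasLinearGrowth (f : ℝ → ℝ) : Prop :=
  ∃ C, ∀ x, |f x| ≤ C * (1 + |x|)

lemma integrable_abs_gaussianReal (μ : ℝ) (v : ℝ≥0) :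
    Integrable (fun x => |x|) (gaussianReal μ v) :=
  (memLp_one_iff_integrable.mp (memLp_id_gaussianReal 1)).abs

namespace HasLinearGrowth

variable {f g : ℝ → ℝ}

lemma sub_const (c : ℝ) : HasLinearGrowth fun x => x - c :=
  ⟨1 + |c|, fun x => by
    have := abs_sub x c
    nlinarith [abs_nonneg x, abs_nonneg c]⟩

lemma add (hf : HasLinearGrowth f) (hg : HasLinearGrowth g) : HasLinearGrowth (f + g) := by
  obtain ⟨C, hC⟩ := hf
  obtain ⟨D, hD⟩ := hg
  exact ⟨C + D, fun x => (abs_add_le _ _).trans (by linarith [hC x, hD x])⟩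

lemma const_mul (hf : HasLinearGrowth f) (c : ℝ) : HasLinearGrowth fun x => c * f x := by
  obtain ⟨C, hC⟩ := hf
  refine ⟨|c| * C, fun x => ?_⟩
  rw [abs_mul, mul_assoc]
  exact mul_le_mul_of_nonneg_left (hC x) (abs_nonneg c)

lemma of_abs_le (hf : HasLinearGrowth f) (hgf : ∀ x, |g x| ≤ |f x|) : HasLinearGrowth g := by
  obtain ⟨C, hC⟩ := hf
  exact ⟨C, fun x => (hgf x).trans (hC x)⟩

lemma max_zero (hf : HasLinearGrowth f) : HasLinearGrowth fun x => max (f x) 0 :=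
  hf.of_abs_le fun x => by
    rw [abs_of_nonneg (le_max_right _ _)]
    exact max_le (le_abs_self _) (abs_nonneg _)

lemma comp_add_mul (hf : HasLinearGrowth f) (a b : ℝ) :
    HasLinearGrowth fun x => f (a + b * x) := by
  obtain ⟨C, hC⟩ := hf
  have hC0 : 0 ≤ C := by nlinarith [hC 0, abs_nonneg (f 0), abs_nonneg (0 : ℝ)]
  refine ⟨C * (1 + |a| + |b|), fun x => (hC _).trans ?_⟩
  have hax : |a + b * x| ≤ |a| + |b| * |x| := by
    simpa only [abs_mul] using abs_add_le a (b * x)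
  rw [mul_assoc]
  gcongr
  nlinarith [abs_nonneg a, abs_nonneg b, abs_nonneg x]

lemma integrable_gaussianReal (hf : HasLinearGrowth f) (hmeas : Measurable f) (μ : ℝ) (v : ℝ≥0) :
    Integrable f (gaussianReal μ v) := by
  obtain ⟨C, hC⟩ := hf
  refine ((integrable_const C).add ((integrable_abs_gaussianReal μ v).const_mul C)).mono'
    hmeas.aestronglyMeasurable (ae_of_all _ fun x => ?_)
  exact (hC x).trans_eq (mul_one_add C |x|)

lemma integral_gaussianReal_comp_add_mul (hf : HasLinearGrowth f) (b : ℝ) (v : ℝ≥0) :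
    HasLinearGrowth fun μ => ∫ x, f (μ + b * x) ∂gaussianReal 0 v := by
  obtain ⟨C, hC⟩ := hf
  have hC0 : 0 ≤ C := by nlinarith [hC 0, abs_nonneg (f 0), abs_nonneg (0 : ℝ)]
  set K := ∫ x, |x| ∂gaussianReal 0 v
  have hK0 : 0 ≤ K := integral_nonneg fun x => abs_nonneg x
  refine ⟨C * (1 + |b| * K), fun μ => ?_⟩
  have hdom : Integrable (fun x : ℝ => C * (1 + |μ|) + C * |b| * |x|) (gaussianReal 0 v) :=
    (integrable_const _).add ((integrable_abs_gaussianReal 0 v).const_mul _)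
  calc |∫ x, f (μ + b * x) ∂gaussianReal 0 v|
      ≤ ∫ x, (C * (1 + |μ|) + C * |b| * |x|) ∂gaussianReal 0 v := by
        refine norm_integral_le_of_norm_le (f := fun x => f (μ + b * x)) hdom
          (ae_of_all _ fun x => ?_)
        have : |μ + b * x| ≤ |μ| + |b| * |x| := by
          simpa only [abs_mul] using abs_add_le μ (b * x)
        rw [Real.norm_eq_abs]
        nlinarith [hC (μ + b * x)]
    _ = C * (1 + |μ|) + C * |b| * K := by
        rw [integral_add (integrable_const _), integral_const, integral_const_mul]
        · rw [probReal_univ, smul_eq_mul, one_mul]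
        · exact (integrable_abs_gaussianReal 0 v).const_mul _
    _ ≤ C * (1 + |b| * K) * (1 + |μ|) := by
        nlinarith [mul_nonneg (mul_nonneg hC0 (abs_nonneg b)) (mul_nonneg hK0 (abs_nonneg μ))]

end HasLinearGrowth

lemma monotone_integral_gaussianReal_comp_add_mul {f : ℝ → ℝ} (hf : Monotone f)
    (hgrowth : HasLinearGrowth f) (b : ℝ) (v : ℝ≥0) :
    Monotone fun μ => ∫ x, f (μ + b * x) ∂gaussianReal 0 v := by
  have hint : ∀ μ, Integrable (fun x => f (μ + b * x)) (gaussianReal 0 v) := fun μ =>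
    (hgrowth.comp_add_mul μ b).integrable_gaussianReal (hf.measurable.comp (by fun_prop)) 0 v
  exact fun μ μ' hμ => integral_mono (hint μ) (hint μ') fun x => hf (by linarith)

lemma integral_gaussianReal_eq_integral_const_add (g : ℝ → ℝ) (μ : ℝ) (v : ℝ≥0) :
    ∫ y, g y ∂gaussianReal μ v = ∫ x, g (μ + x) ∂gaussianReal 0 v := by
  have hmap : (gaussianReal 0 v).map (MeasurableEquiv.addLeft μ) = gaussianReal μ v := by
    rw [MeasurableEquiv.coe_addLeft, gaussianReal_map_const_add, zero_add]
  rw [← hmap, (MeasurableEquiv.addLeft μ).measurableEmbedding.integral_map]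
  rfl

section ValueFunction

variable {γ τ lam : ℝ}

lemma V_nonneg (hγ1 : γ ≤ 1) (m : ℕ) (μ n : ℝ) : 0 ≤ V γ τ m μ n lam := by
  cases m with
  | zero => exact div_nonneg (le_max_right _ _) (by linarith)
  | succ m => exact le_max_right _ _

lemma V_succ_eq_max_integral {n : ℝ} (hnτ : n + τ ≠ 0) (m : ℕ) (μ : ℝ) :
    V γ τ (m + 1) μ n lam = max (μ - lam + γ * ∫ x, V γ τ m (μ + τ / (n + τ) * x) (n + τ) lam
      ∂gaussianReal 0 (1 / n + 1 / τ).toNNReal) 0 := by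
  rw [V, integral_gaussianReal_eq_integral_const_add]
  congr 4 with x
  congr 1
  field_simp
  ring

lemma hasLinearGrowth_V_zero (n : ℝ) : HasLinearGrowth fun μ => V γ τ 0 μ n lam := by
  simpa only [V, div_eq_inv_mul] using
    ((HasLinearGrowth.sub_const lam).max_zero.const_mul (1 - γ)⁻¹)

lemma monotone_V_and_hasLinearGrowth (hγ0 : 0 ≤ γ) (hγ1 : γ ≤ 1) (hτ : 0 ≤ τ) (m : ℕ) {n : ℝ}
    (hn : 0 < n) :
    Monotone (fun μ => V γ τ m μ n lam) ∧ HasLinearGrowth fun μ => V γ τ m μ n lam := by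
  induction m generalizing n with
  | zero =>
    exact ⟨fun μ μ' hμ => div_le_div_of_nonneg_right (by gcongr) (by linarith),
      hasLinearGrowth_V_zero n⟩
  | succ m ih =>
    have hnτ : 0 < n + τ := by linarith
    obtain ⟨hmono, hgrowth⟩ := ih hnτ
    simp only [V_succ_eq_max_integral hnτ.ne']
    refine ⟨fun μ μ' hμ => ?_, ?_⟩
    · have hint := monotone_integral_gaussianReal_comp_add_mul hmono hgrowth
        (τ / (n + τ)) (1 / n + 1 / τ).toNNReal hμ
      exact max_le_max_right 0 (add_le_add (sub_le_sub_right hμ lam)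
        (mul_le_mul_of_nonneg_left hint hγ0))
    · exact ((HasLinearGrowth.sub_const lam).add
        ((hgrowth.integral_gaussianReal_comp_add_mul _ _).const_mul γ)).max_zero

end ValueFunction

/-- Proposition 1: for every horizon `m`, every `n > 0` and all `μ̃ < μ`,
if `V_m(μ,n,γ,τ,λ) = 0` then `V_m(μ̃,n,γ,τ,λ) = 0`. -/
theorem nmab_retire_below (γ τ lam : ℝ)
    (hγ0 : 0 ≤ γ) (hγ1 : γ < 1) (hτ : 0 < τ) :
    ∀ m : ℕ, ∀ μt μ n : ℝ, 0 < n → μt < μ →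
      V γ τ m μ n lam = 0 → V γ τ m μt n lam = 0 := by
  intro m μt μ n hn hlt h0
  have hmono := (monotone_V_and_hasLinearGrowth (lam := lam) hγ0 hγ1.le hτ.le m hn).1 hlt.le
  exact le_antisymm (h0 ▸ hmono) (V_nonneg hγ1.le m μt n)
end

section
/- For every horizon m ≥ 0, every μ ∈ ℝ and every n > 0, the map λ ↦ V_m(μ,n,γ,τ,λ) is nonincreasing and Lipschitz continuous with Lipschitz constant 1/(1−γ): if λ ≤ λ' then V_m(μ,n,γ,τ,λ') ≤ V_m(μ,n,γ,τ,λ), and |V_m(μ,n,γ,τ,λ) − V_m(μ,n,γ,τ,λ')| ≤ |λ − λ'|/(1−γ) for all λ, λ'. -/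
open MeasureTheory ProbabilityTheory

/-!
Both claims go by induction on the horizon. The safe reward `λ` enters each
Bellman step once with coefficient `-1` and once through the continuation value, which is
discounted by `γ`; so a change of `λ` by `δ` changes `V_{m+1}` by at most
`δ + γ · δ / (1 - γ) = δ / (1 - γ)`, and lowers it when `δ ≥ 0`. The integrals need no
integrability argument: continuation values for two rewards differ by a bounded amount, so
they are integrable for both rewards or for neither, and in the latter case both Bochner
integrals are `0`.
-/

section BoundedDifference

variable {α : Type*} [MeasurableSpace α] {P : Measure α} {f g : α → ℝ} {C : ℝ}

section Finite

variable [IsFiniteMeasure P]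

lemma MeasureTheory.Integrable.of_abs_sub_le (hf : Integrable f P)
    (hg : AEStronglyMeasurable g P) (h : ∀ᵐ y ∂P, |f y - g y| ≤ C) : Integrable g P := by
  have hdiff : Integrable (g - f) P :=
    .of_bound (hg.sub hf.aestronglyMeasurable) C (by
      filter_upwards [h] with y hy
      rwa [Pi.sub_apply, Real.norm_eq_abs, abs_sub_comm])
  simpa using hf.add hdiff

lemma integrable_iff_of_abs_sub_le (hf : AEStronglyMeasurable f P)
    (hg : AEStronglyMeasurable g P) (h : ∀ᵐ y ∂P, |f y - g y| ≤ C) :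
    Integrable f P ↔ Integrable g P :=
  ⟨fun hfi => hfi.of_abs_sub_le hg h,
    fun hgi => hgi.of_abs_sub_le hf (by simpa only [abs_sub_comm] using h)⟩

lemma integral_mono_of_abs_sub_le (hf : AEStronglyMeasurable f P)
    (hg : AEStronglyMeasurable g P) (h : ∀ᵐ y ∂P, |f y - g y| ≤ C) (hfg : f ≤ᵐ[P] g) :
    ∫ y, f y ∂P ≤ ∫ y, g y ∂P := by
  by_cases hfi : Integrable f P
  · exact integral_mono_ae hfi (hfi.of_abs_sub_le hg h) hfg
  · have hgi : ¬ Integrable g P := by rwa [← integrable_iff_of_abs_sub_le hf hg h]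
    rw [integral_undef hfi, integral_undef hgi]

end Finite

lemma abs_integral_sub_integral_le_of_abs_sub_le [IsProbabilityMeasure P]
    (hf : AEStronglyMeasurable f P) (hg : AEStronglyMeasurable g P)
    (h : ∀ᵐ y ∂P, |f y - g y| ≤ C) :
    |∫ y, f y ∂P - ∫ y, g y ∂P| ≤ C := by
  by_cases hfi : Integrable f P
  · have hgi := hfi.of_abs_sub_le hg h
    rw [← integral_sub hfi hgi]
    simpa using norm_integral_le_of_norm_le_const (μ := P) (f := f - g) (by simpa using h)
  · have hgi : ¬ Integrable g P := by rwa [← integrable_iff_of_abs_sub_le hf hg h]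
    obtain ⟨y, hy⟩ := h.exists
    simpa [integral_undef hfi, integral_undef hgi] using (abs_nonneg _).trans hy

end BoundedDifference

lemma measurable_integral_gaussianReal {F : ℝ × ℝ → ℝ} (hF : Measurable F) (v : NNReal) :
    Measurable fun μ => ∫ y, F (μ, y) ∂gaussianReal μ v := by
  let κ : Kernel ℝ ℝ :=
    ⟨fun μ => gaussianReal μ v,
      measurable_gaussianReal.comp (measurable_id.prodMk measurable_const)⟩
  have : IsMarkovKernel κ := ⟨fun μ => inferInstanceAs (IsProbabilityMeasure (gaussianReal μ v))⟩
  exact (hF.stronglyMeasurable.integral_kernel_prod_right' (κ := κ)).measurable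

lemma measurable_V (γ τ : ℝ) (m : ℕ) (n lam : ℝ) : Measurable fun μ => V γ τ m μ n lam := by
  induction m generalizing n with
  | zero => simp only [V]; fun_prop
  | succ m ih =>
    have hcont := measurable_integral_gaussianReal
      ((ih (n + τ)).comp (f := fun p : ℝ × ℝ => (n * p.1 + τ * p.2) / (n + τ)) (by fun_prop))
      (1 / n + 1 / τ).toNNReal
    simp only [V]
    fun_prop

section SafeReward

variable {γ : ℝ} (τ : ℝ)

lemma abs_V_sub_V_le (hγ0 : 0 ≤ γ) (hγ1 : γ < 1) (m : ℕ) (μ n lam lam' : ℝ) :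
    |V γ τ m μ n lam - V γ τ m μ n lam'| ≤ |lam - lam'| / (1 - γ) := by
  have hγ : 0 < 1 - γ := by linarith
  induction m generalizing μ n with
  | zero =>
    simp only [V]
    rw [div_sub_div_same, abs_div, abs_of_pos hγ]
    refine div_le_div_of_nonneg_right ?_ hγ.le
    simpa [abs_sub_comm] using abs_max_sub_max_le_abs (μ - lam) (μ - lam') 0
  | succ m ih =>
    set P := gaussianReal μ (1 / n + 1 / τ).toNNReal
    set I := fun lam y => V γ τ m ((n * μ + τ * y) / (n + τ)) (n + τ) lam
    have hI : |∫ y, I lam y ∂P - ∫ y, I lam' y ∂P| ≤ |lam - lam'| / (1 - γ) :=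
      abs_integral_sub_integral_le_of_abs_sub_le
        ((measurable_V γ τ m _ lam).comp (by fun_prop)).aestronglyMeasurable
        ((measurable_V γ τ m _ lam').comp (by fun_prop)).aestronglyMeasurable
        (.of_forall fun _ => ih _ _)
    calc |max (μ - lam + γ * ∫ y, I lam y ∂P) 0 - max (μ - lam' + γ * ∫ y, I lam' y ∂P) 0|
        ≤ |(μ - lam + γ * ∫ y, I lam y ∂P) - (μ - lam' + γ * ∫ y, I lam' y ∂P)| :=
          abs_max_sub_max_le_abs _ _ _
      _ = |(lam' - lam) + γ * (∫ y, I lam y ∂P - ∫ y, I lam' y ∂P)| := by ring_nf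
      _ ≤ |lam - lam'| + γ * (|lam - lam'| / (1 - γ)) := by
          grw [abs_add_le, abs_mul, abs_of_nonneg hγ0, abs_sub_comm lam', hI]
      _ = |lam - lam'| / (1 - γ) := by field_simp; ring

lemma V_antitone (hγ0 : 0 ≤ γ) (hγ1 : γ < 1) (m : ℕ) (μ n : ℝ) :
    Antitone fun lam => V γ τ m μ n lam := by
  induction m generalizing μ n with
  | zero =>
    intro lam lam' hle
    simp only [V]
    gcongr
  | succ m ih =>
    intro lam lam' hle
    simp only [V]
    gcongr max (_ - ?_ + γ * ?_) 0
    exact integral_mono_of_abs_sub_le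
      ((measurable_V γ τ m _ lam').comp (by fun_prop)).aestronglyMeasurable
      ((measurable_V γ τ m _ lam).comp (by fun_prop)).aestronglyMeasurable
      (.of_forall fun _ => abs_V_sub_V_le τ hγ0 hγ1 m _ _ lam' lam)
      (.of_forall fun _ => ih _ _ hle)

end SafeReward

theorem nmab_value_lambda_monotone_lipschitz_general (γ τ : ℝ)
    (hγ0 : 0 ≤ γ) (hγ1 : γ < 1) :
    ∀ m : ℕ, ∀ μ n : ℝ, 0 < n →
      (∀ lam lam' : ℝ, lam ≤ lam' →
        V γ τ m μ n lam' ≤ V γ τ m μ n lam) ∧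
      (∀ lam lam' : ℝ,
        |V γ τ m μ n lam - V γ τ m μ n lam'| ≤ |lam - lam'| / (1 - γ)) :=
  fun m μ n _ =>
    ⟨fun _ _ hle => V_antitone τ hγ0 hγ1 m μ n hle, abs_V_sub_V_le τ hγ0 hγ1 m μ n⟩

/-- For every horizon `m`, every `μ` and `n > 0`, the map
`λ ↦ V_m(μ,n,γ,τ,λ)` is nonincreasing and Lipschitz with constant
`1/(1−γ)`. -/
theorem nmab_value_lambda_monotone_lipschitz (γ τ : ℝ)
    (hγ0 : 0 ≤ γ) (hγ1 : γ < 1) (hτ : 0 < τ) :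
    ∀ m : ℕ, ∀ μ n : ℝ, 0 < n →
      (∀ lam lam' : ℝ, lam ≤ lam' →
        V γ τ m μ n lam' ≤ V γ τ m μ n lam) ∧
      (∀ lam lam' : ℝ,
        |V γ τ m μ n lam - V γ τ m μ n lam'| ≤ |lam - lam'| / (1 - γ)) :=
  nmab_value_lambda_monotone_lipschitz_general γ τ hγ0 hγ1
end

section
/- (Retirement below the initial mean loses nothing) With U and Ũ as defined in the context, U_0(μ_a) = 0 if and only if Ũ_0(μ_a) = 0. That is, modifying the Gaussian one-armed-bandit dynamic programme to retire (assign value 0) in every state whose posterior mean lies strictly below the initial mean μ_a does not change whether the value at the initial state (μ_a, n_a) is zero, and hence does not change the Gittins index computed by calibration. -/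
open MeasureTheory ProbabilityTheory Real Set

/-- Stage-indexed value functions of the Gaussian one-armed bandit, indexed by
the number `d` of remaining stages and the current Bayesian number of
observations `n`: `U γ τ lam d n μ` is the value `U_j(μ)` of the paper with
`d = N − j` and `n = n_j = n_a + jτ` (so `U_N` is the terminal value and
`U_0(μ_a) = U γ τ lam N n_a μ_a`). -/
noncomputable def U (γ τ lam : ℝ) : ℕ → ℝ → ℝ → ℝ
  | 0, _n, μ => max (μ - lam) 0 / (1 - γ)
  | d + 1, n, μ =>
      max (μ - lam + γ * ∫ y, U γ τ lam d (n + τ) ((n * μ + τ * y) / (n + τ))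
        ∂(gaussianReal μ (1 / n + 1 / τ).toNNReal)) 0

/-- The modified value functions `Ũ_j`, following the same recursion as `U`
except that the value is set to `0` (retirement) in every state whose
posterior mean lies strictly below the initial mean `μ_a`, at every stage
including the terminal one. -/
noncomputable def Umod (γ τ lam μa : ℝ) : ℕ → ℝ → ℝ → ℝ
  | 0, _n, μ => if μ < μa then 0 else max (μ - lam) 0 / (1 - γ)
  | d + 1, n, μ =>
      if μ < μa then 0 else
      max (μ - lam + γ * ∫ y, Umod γ τ lam μa d (n + τ) ((n * μ + τ * y) / (n + τ))
        ∂(gaussianReal μ (1 / n + 1 / τ).toNNReal)) 0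

/-!
Write `ε = U_0(μ_a) ≥ 0`. Each `U_j` is nonnegative, monotone, convex and Lipschitz in `μ`; by
convexity, and because the next posterior mean spreads out less as `n` grows, `U_j` is
nonincreasing in the precision `n` and nondecreasing in the remaining horizon. Hence
`U_j(μ) ≤ ε` whenever `μ ≤ μ_a`. Backward induction then gives `U_j − Ũ_j ≤ ε` below `μ_a`
and `U_j − Ũ_j ≤ γ ε` at or above `μ_a`, where the two programmes differ only through the
discounted continuation. At the initial state this reads `ε − Ũ_0(μ_a) ≤ γ ε`, so
`Ũ_0(μ_a) = 0` forces `ε = 0`; conversely `0 ≤ Ũ_0 ≤ U_0`.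
-/

section SymmetricLaw

variable {ν : Measure ℝ}

theorem integral_comp_neg_of_map_neg_eq (hν : ν.map (fun x => -x) = ν) (f : ℝ → ℝ) :
    ∫ z, f (-z) ∂ν = ∫ z, f z ∂ν := by
  conv_rhs => rw [← hν]
  exact ((Homeomorph.neg ℝ).measurableEmbedding.integral_map f).symm

theorem MeasureTheory.Integrable.comp_neg_of_map_neg_eq (hν : ν.map (fun x => -x) = ν) {f : ℝ → ℝ}
    (hf : Integrable f ν) : Integrable (fun z => f (-z)) ν := by
  rw [← hν] at hf
  exact (Homeomorph.neg ℝ).measurableEmbedding.integrable_map_iff.mp hf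

/-- `μ + s z` is the convex combination `(1 + r)/2 • (μ + t z) + (1 - r)/2 • (μ - t z)` with
`r = s / t`, and the two points have the same law. -/
theorem ConvexOn.integral_comp_add_mul_le {g : ℝ → ℝ} (hg : ConvexOn ℝ univ g)
    (hν : ν.map (fun x => -x) = ν) {μ s t : ℝ} (hs : 0 ≤ s) (hst : s ≤ t)
    (hgs : Integrable (fun z => g (μ + s * z)) ν) (hgt : Integrable (fun z => g (μ + t * z)) ν) :
    ∫ z, g (μ + s * z) ∂ν ≤ ∫ z, g (μ + t * z) ∂ν := by
  set r := s / t
  have hr0 : 0 ≤ r := div_nonneg hs (hs.trans hst)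
  have hr1 : r ≤ 1 := div_le_one_of_le₀ hst (hs.trans hst)
  have hs_eq : s = r * t := by
    rcases (hs.trans hst).eq_or_lt with ht | ht
    · rw [← ht] at hst ⊢
      simp [le_antisymm hst hs]
    · exact (div_mul_cancel₀ s ht.ne').symm
  have hneg : Integrable (fun z => g (μ - t * z)) ν := by
    simpa [← sub_eq_add_neg] using hgt.comp_neg_of_map_neg_eq hν
  have hsym : ∫ z, g (μ - t * z) ∂ν = ∫ z, g (μ + t * z) ∂ν := by
    simpa [← sub_eq_add_neg] using integral_comp_neg_of_map_neg_eq hν (fun z => g (μ + t * z))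
  have hpt : ∀ z, g (μ + s * z) ≤ (1 + r) / 2 * g (μ + t * z) + (1 - r) / 2 * g (μ - t * z) := by
    intro z
    have := hg.2 (mem_univ (μ + t * z)) (mem_univ (μ - t * z))
      (by linarith : 0 ≤ (1 + r) / 2) (by linarith : 0 ≤ (1 - r) / 2) (by ring)
    have harg : μ + s * z = (1 + r) / 2 * (μ + t * z) + (1 - r) / 2 * (μ - t * z) := by
      rw [hs_eq]; ring
    simpa only [harg, smul_eq_mul] using this
  calc ∫ z, g (μ + s * z) ∂ν
      ≤ ∫ z, ((1 + r) / 2 * g (μ + t * z) + (1 - r) / 2 * g (μ - t * z)) ∂ν :=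
        integral_mono hgs ((hgt.const_mul _).add (hneg.const_mul _)) hpt
    _ = ∫ z, g (μ + t * z) ∂ν := by
        rw [integral_add (hgt.const_mul _) (hneg.const_mul _), integral_const_mul,
          integral_const_mul, hsym]
        ring

end SymmetricLaw

theorem LipschitzWith.integrable_comp_add_mul {ν : Measure ℝ} [IsFiniteMeasure ν] {K : NNReal}
    {g : ℝ → ℝ} (hg : LipschitzWith K g) (hν : Integrable (fun x => x) ν) (μ s : ℝ) :
    Integrable (fun z => g (μ + s * z)) ν := by
  refine Integrable.mono' ((integrable_const |g μ|).add (hν.abs.const_mul (K * |s|)))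
    (hg.continuous.comp (by fun_prop)).aestronglyMeasurable (ae_of_all _ fun z => ?_)
  have hK := hg.dist_le_mul (μ + s * z) μ
  rw [Real.dist_eq, Real.dist_eq, add_sub_cancel_left, abs_mul] at hK
  rw [Real.norm_eq_abs]
  have := abs_sub_abs_le_abs_sub (g (μ + s * z)) (g μ)
  simp only [Pi.add_apply]
  nlinarith

theorem integrable_id_gaussianReal {m : ℝ} {v : NNReal} :
    Integrable (fun x => x) (gaussianReal m v) :=
  (memLp_id_gaussianReal 1).integrable le_rfl

theorem ConvexOn.integral_comp_add {α : Type*} [MeasurableSpace α] {ν : Measure α} {g : ℝ → ℝ}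
    (hg : ConvexOn ℝ univ g) {f : α → ℝ} (hint : ∀ μ, Integrable (fun z => g (μ + f z)) ν) :
    ConvexOn ℝ univ (fun μ => ∫ z, g (μ + f z) ∂ν) := by
  refine ⟨convex_univ, fun x _ y _ a b ha hb hab => ?_⟩
  simp only [smul_eq_mul]
  rw [← integral_const_mul, ← integral_const_mul, ← integral_add ((hint x).const_mul a)
    ((hint y).const_mul b)]
  refine integral_mono (hint _) (((hint x).const_mul a).add ((hint y).const_mul b)) fun z => ?_
  have := hg.2 (mem_univ (x + f z)) (mem_univ (y + f z)) ha hb hab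
  simp only [smul_eq_mul] at this
  convert this using 2
  linear_combination f z * hab.symm

theorem Monotone.integrable_comp_add_mul_of_le {ν : Measure ℝ} {f g : ℝ → ℝ} (hf : Monotone f)
    (hf0 : ∀ x, 0 ≤ f x) (hfg : ∀ x, f x ≤ g x) {μ s : ℝ}
    (hg : Integrable (fun z => g (μ + s * z)) ν) : Integrable (fun z => f (μ + s * z)) ν :=
  hg.mono' (hf.measurable.comp (by fun_prop)).aestronglyMeasurable
    (ae_of_all _ fun z => by rw [Real.norm_of_nonneg (hf0 _)]; exact hfg _)

noncomputable def bellman (γ lam s : ℝ) (g : ℝ → ℝ) (μ : ℝ) : ℝ :=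
  max (μ - lam + γ * ∫ z, g (μ + s * z) ∂gaussianReal 0 1) 0

section Bellman

variable {γ lam s : ℝ} {g h : ℝ → ℝ} {μ : ℝ}

theorem bellman_nonneg : 0 ≤ bellman γ lam s g μ := le_max_right _ _

theorem bellman_zero_scale : bellman γ lam 0 g μ = max (μ - lam + γ * g μ) 0 := by
  simp [bellman]

theorem lipschitzWith_bellman {K : NNReal} (hγ : 0 ≤ γ) (hK : 1 + γ * K ≤ K)
    (hg : LipschitzWith K g) : LipschitzWith K (bellman γ lam s g) := by
  have hint := hg.integrable_comp_add_mul (integrable_id_gaussianReal (m := 0) (v := 1))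
  refine LipschitzWith.of_dist_le_mul fun x y => ?_
  set Ix := ∫ z, g (x + s * z) ∂gaussianReal 0 1
  set Iy := ∫ z, g (y + s * z) ∂gaussianReal 0 1
  have hI : |Ix - Iy| ≤ K * |x - y| := by
    rw [← integral_sub (hint x s) (hint y s)]
    have hpt : ∀ z, ‖g (x + s * z) - g (y + s * z)‖ ≤ K * |x - y| := fun z => by
      simpa [Real.dist_eq] using hg.dist_le_mul (x + s * z) (y + s * z)
    simpa using norm_integral_le_of_norm_le_const (μ := gaussianReal 0 1) (ae_of_all _ hpt)
  rw [Real.dist_eq, Real.dist_eq]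
  calc |max (x - lam + γ * Ix) 0 - max (y - lam + γ * Iy) 0|
      ≤ |(x - y) + γ * (Ix - Iy)| := by
        refine (abs_max_sub_max_le_abs _ _ _).trans_eq (congrArg _ ?_)
        ring
    _ ≤ |x - y| + γ * |Ix - Iy| := by
        refine (abs_add_le _ _).trans_eq ?_
        rw [abs_mul, abs_of_nonneg hγ]
    _ ≤ K * |x - y| := by nlinarith [abs_nonneg (x - y)]

theorem monotone_bellman (hγ : 0 ≤ γ) (hg : Monotone g)
    (hint : ∀ μ, Integrable (fun z => g (μ + s * z)) (gaussianReal 0 1)) :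
    Monotone (bellman γ lam s g) := by
  intro x y hxy
  have hI : ∫ z, g (x + s * z) ∂gaussianReal 0 1 ≤ ∫ z, g (y + s * z) ∂gaussianReal 0 1 :=
    integral_mono (hint x) (hint y) fun z => hg (by linarith)
  unfold bellman
  gcongr

theorem convexOn_bellman (hγ : 0 ≤ γ) (hg : ConvexOn ℝ univ g)
    (hint : ∀ μ, Integrable (fun z => g (μ + s * z)) (gaussianReal 0 1)) :
    ConvexOn ℝ univ (bellman γ lam s g) := by
  have := (((convexOn_id convex_univ).add_const (-lam)).add
    ((hg.integral_comp_add hint).smul hγ)).sup (convexOn_const 0 convex_univ)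
  exact this.congr fun μ _ => by simp [bellman, sub_eq_add_neg]

theorem bellman_le_bellman (hγ : 0 ≤ γ) (hg : ∀ x, 0 ≤ g x) (hgh : ∀ x, g x ≤ h x)
    (hh : Integrable (fun z => h (μ + s * z)) (gaussianReal 0 1)) :
    bellman γ lam s g μ ≤ bellman γ lam s h μ := by
  have hI : ∫ z, g (μ + s * z) ∂gaussianReal 0 1 ≤ ∫ z, h (μ + s * z) ∂gaussianReal 0 1 :=
    integral_mono_of_nonneg (ae_of_all _ fun z => hg _) hh (ae_of_all _ fun z => hgh _)
  unfold bellman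
  gcongr

theorem bellman_le_bellman_of_scale_le {t : ℝ} (hγ : 0 ≤ γ) (hg : ConvexOn ℝ univ g)
    (hs : 0 ≤ s) (hst : s ≤ t) (hgs : Integrable (fun z => g (μ + s * z)) (gaussianReal 0 1))
    (hgt : Integrable (fun z => g (μ + t * z)) (gaussianReal 0 1)) :
    bellman γ lam s g μ ≤ bellman γ lam t g μ := by
  have hI := hg.integral_comp_add_mul_le
    (by simpa using gaussianReal_map_neg (μ := 0) (v := 1)) hs hst hgs hgt
  unfold bellman
  gcongr

theorem bellman_sub_bellman_le {c : ℝ} (hγ : 0 ≤ γ) (hc : 0 ≤ c)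
    (hg : Integrable (fun z => g (μ + s * z)) (gaussianReal 0 1))
    (hh : Integrable (fun z => h (μ + s * z)) (gaussianReal 0 1)) (hhg : ∀ x, h x - g x ≤ c) :
    bellman γ lam s h μ - bellman γ lam s g μ ≤ γ * c := by
  have hI : ∫ z, h (μ + s * z) ∂gaussianReal 0 1 - ∫ z, g (μ + s * z) ∂gaussianReal 0 1 ≤ c := by
    rw [← integral_sub hh hg]
    exact (integral_mono (hh.sub hg) (integrable_const c) fun z => hhg _).trans_eq (by simp)
  refine (max_sub_max_le_max _ _ _ _).trans (max_le ?_ (by simpa using mul_nonneg hγ hc))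
  nlinarith

end Bellman

/-- The standard deviation of the next posterior mean `(n μ + τ y) / (n + τ)` when
`y ∼ 𝒩(μ, 1/n + 1/τ)`. -/
noncomputable def postScale (τ n : ℝ) : ℝ := √(τ / (n * (n + τ)))

section PostScale

variable {τ n : ℝ}

theorem postScale_nonneg : 0 ≤ postScale τ n := sqrt_nonneg _

theorem postScale_antitoneOn (hτ : 0 < τ) : AntitoneOn (postScale τ) (Ioi 0) := by
  intro n (hn : 0 < n) m (hm : 0 < m) hnm
  apply sqrt_le_sqrt
  apply div_le_div_of_nonneg_left hτ.le (by positivity)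
  nlinarith

theorem integral_gaussianReal_posteriorMean (hτ : 0 < τ) (hn : 0 < n) (μ : ℝ) (f : ℝ → ℝ) :
    ∫ y, f ((n * μ + τ * y) / (n + τ)) ∂gaussianReal μ (1 / n + 1 / τ).toNNReal
      = ∫ z, f (μ + postScale τ n * z) ∂gaussianReal 0 1 := by
  set c := √(1 / n + 1 / τ)
  have hc : 0 < c := sqrt_pos.mpr (by positivity)
  have hlaw : gaussianReal μ (1 / n + 1 / τ).toNNReal
      = ((gaussianReal 0 1).map (c * ·)).map (μ + ·) := by
    rw [gaussianReal_map_const_mul, mul_zero, gaussianReal_map_const_add, zero_add]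
    congr 1
    ext
    simp only [NNReal.coe_mk, mul_one, c,
      sq_sqrt (by positivity : (0 : ℝ) ≤ 1 / n + 1 / τ)]
    exact Real.coe_toNNReal _ (by positivity)
  have hscale : postScale τ n = τ * c / (n + τ) := by
    rw [postScale, show τ / (n * (n + τ)) = (τ / (n + τ)) ^ 2 * (1 / n + 1 / τ) by
      field_simp; ring, sqrt_mul (by positivity), sqrt_sq (by positivity)]
    ring
  rw [hlaw, (measurableEmbedding_addLeft μ).integral_map,
    (measurableEmbedding_mulLeft₀ hc.ne').integral_map, hscale]
  congr 1 with z
  congr 1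
  field_simp
  ring

end PostScale

section ValueFunction

variable {γ τ lam n : ℝ}

theorem U_succ (hτ : 0 < τ) (hn : 0 < n) (d : ℕ) :
    U γ τ lam (d + 1) n = bellman γ lam (postScale τ n) (U γ τ lam d (n + τ)) := by
  ext μ
  rw [U, integral_gaussianReal_posteriorMean hτ hn, bellman]

theorem U_nonneg (hγ1 : γ < 1) : ∀ d n μ, 0 ≤ U γ τ lam d n μ
  | 0, _, _ => div_nonneg (le_max_right _ _) (sub_nonneg.2 hγ1.le)
  | _ + 1, _, _ => le_max_right _ _

variable (hγ0 : 0 ≤ γ) (hγ1 : γ < 1) (hτ : 0 < τ)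
include hγ0 hγ1 hτ

theorem lipschitzWith_U : ∀ d {n}, 0 < n → LipschitzWith (1 - γ)⁻¹.toNNReal (U γ τ lam d n)
  | 0, _, _ => by
    have h1γ : 0 < 1 - γ := sub_pos.2 hγ1
    refine LipschitzWith.of_dist_le_mul fun x y => ?_
    rw [Real.coe_toNNReal _ (inv_nonneg.2 h1γ.le), Real.dist_eq, Real.dist_eq, U, U, ← sub_div,
      abs_div, abs_of_pos h1γ, div_le_iff₀ h1γ, mul_right_comm, inv_mul_cancel₀ h1γ.ne', one_mul]
    exact (abs_max_sub_max_le_abs _ _ _).trans_eq (by ring_nf)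
  | d + 1, n, hn => by
    rw [U_succ hτ hn]
    refine lipschitzWith_bellman hγ0 ?_ (lipschitzWith_U d (by linarith))
    rw [Real.coe_toNNReal _ (inv_nonneg.2 (sub_pos.2 hγ1).le)]
    have h1γ : 1 - γ ≠ 0 := (sub_pos.2 hγ1).ne'
    exact (show 1 + γ * (1 - γ)⁻¹ = (1 - γ)⁻¹ by field_simp; ring).le

theorem integrable_U (d : ℕ) (hn : 0 < n) (μ s : ℝ) :
    Integrable (fun z => U γ τ lam d n (μ + s * z)) (gaussianReal 0 1) :=
  (lipschitzWith_U hγ0 hγ1 hτ d hn).integrable_comp_add_mul integrable_id_gaussianReal μ s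

theorem monotone_U : ∀ d {n}, 0 < n → Monotone (U γ τ lam d n)
  | 0, _, _ => fun x y hxy => by
    unfold U
    gcongr
  | d + 1, n, hn => by
    rw [U_succ hτ hn]
    exact monotone_bellman hγ0 (monotone_U d (by linarith))
      (integrable_U hγ0 hγ1 hτ d (by linarith) · _)

theorem convexOn_U : ∀ d {n}, 0 < n → ConvexOn ℝ univ (U γ τ lam d n)
  | 0, _, _ => by
    have := (((convexOn_id convex_univ).add_const (-lam)).sup (convexOn_const 0 convex_univ)).smul
      (inv_nonneg.2 (sub_pos.2 hγ1).le)
    exact this.congr fun μ _ => by simp [U, sub_eq_add_neg, div_eq_inv_mul]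
  | d + 1, n, hn => by
    rw [U_succ hτ hn]
    exact convexOn_bellman hγ0 (convexOn_U d (by linarith))
      (integrable_U hγ0 hγ1 hτ d (by linarith) · _)

theorem U_le_U_of_le_precision : ∀ d {n m}, 0 < n → n ≤ m → ∀ μ, U γ τ lam d m μ ≤ U γ τ lam d n μ
  | 0, _, _, _, _, _ => le_rfl
  | d + 1, n, m, hn, hnm, μ => by
    have hm : 0 < m := hn.trans_le hnm
    rw [U_succ hτ hm, U_succ hτ hn]
    calc bellman γ lam (postScale τ m) (U γ τ lam d (m + τ)) μ
        ≤ bellman γ lam (postScale τ m) (U γ τ lam d (n + τ)) μ :=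
          bellman_le_bellman hγ0 (U_nonneg hγ1 d _)
            (U_le_U_of_le_precision d (by linarith) (by linarith))
            (integrable_U hγ0 hγ1 hτ d (by linarith) _ _)
      _ ≤ bellman γ lam (postScale τ n) (U γ τ lam d (n + τ)) μ :=
          bellman_le_bellman_of_scale_le hγ0 (convexOn_U hγ0 hγ1 hτ d (by linarith))
            postScale_nonneg (postScale_antitoneOn hτ hn hm hnm)
            (integrable_U hγ0 hγ1 hτ d (by linarith) _ _)
            (integrable_U hγ0 hγ1 hτ d (by linarith) _ _)

theorem U_le_U_succ : ∀ d {n}, 0 < n → ∀ μ, U γ τ lam d n μ ≤ U γ τ lam (d + 1) n μ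
  | 0, n, hn, μ => by
    have h1γ : 0 < 1 - γ := sub_pos.2 hγ1
    have hterm : U γ τ lam 0 n μ ≤ max (μ - lam + γ * U γ τ lam 0 (n + τ) μ) 0 := by
      simp only [U]
      rcases le_or_gt μ lam with hμ | hμ
      · simp [max_eq_right (sub_nonpos.2 hμ)]
      · rw [max_eq_left (sub_pos.2 hμ).le]
        refine le_max_of_le_left (le_of_eq ?_)
        field_simp
        ring
    rw [U_succ hτ hn 0]
    refine hterm.trans (bellman_zero_scale.symm.trans_le ?_)
    exact bellman_le_bellman_of_scale_le hγ0 (convexOn_U hγ0 hγ1 hτ 0 (by linarith)) le_rfl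
      postScale_nonneg (integrable_U hγ0 hγ1 hτ 0 (by linarith) _ _)
      (integrable_U hγ0 hγ1 hτ 0 (by linarith) _ _)
  | d + 1, n, hn, μ => by
    rw [U_succ hτ hn, U_succ hτ hn]
    exact bellman_le_bellman hγ0 (U_nonneg hγ1 d _) (U_le_U_succ d (by linarith))
      (integrable_U hγ0 hγ1 hτ _ (by linarith) _ _)

theorem U_le_U_of_le {na n μ μ' : ℝ} {d d' : ℕ} (hna : 0 < na) (hn : na ≤ n) (hd : d ≤ d')
    (hμ : μ ≤ μ') : U γ τ lam d n μ ≤ U γ τ lam d' na μ' :=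
  calc U γ τ lam d n μ
      ≤ U γ τ lam d na μ := U_le_U_of_le_precision hγ0 hγ1 hτ d hna hn μ
    _ ≤ U γ τ lam d' na μ :=
        monotone_nat_of_le_succ (fun k => U_le_U_succ hγ0 hγ1 hτ k hna μ) hd
    _ ≤ U γ τ lam d' na μ' := monotone_U hγ0 hγ1 hτ d' hna hμ

end ValueFunction

section RetiringValueFunction

variable {γ τ lam μa : ℝ} {n μ : ℝ}

theorem Umod_succ (hτ : 0 < τ) (hn : 0 < n) (d : ℕ) (μ : ℝ) :
    Umod γ τ lam μa (d + 1) n μ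
      = if μ < μa then 0 else bellman γ lam (postScale τ n) (Umod γ τ lam μa d (n + τ)) μ := by
  rw [Umod, integral_gaussianReal_posteriorMean hτ hn, bellman]

theorem Umod_of_lt (hμ : μ < μa) (d : ℕ) : Umod γ τ lam μa d n μ = 0 := by
  cases d <;> simp [Umod, hμ]

theorem Umod_nonneg (hγ1 : γ < 1) : ∀ d n μ, 0 ≤ Umod γ τ lam μa d n μ
  | 0, _, μ => by
    rw [Umod]
    split_ifs
    exacts [le_rfl, U_nonneg (τ := τ) hγ1 0 0 μ]
  | _ + 1, _, μ => by
    rw [Umod]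
    split_ifs
    exacts [le_rfl, le_max_right _ _]

variable (hγ0 : 0 ≤ γ) (hγ1 : γ < 1) (hτ : 0 < τ)
include hγ0 hγ1 hτ

theorem Umod_le_U : ∀ d {n}, 0 < n → ∀ μ, Umod γ τ lam μa d n μ ≤ U γ τ lam d n μ
  | 0, _, _, μ => by
    rw [Umod]
    split_ifs
    exacts [U_nonneg hγ1 0 _ μ, le_rfl]
  | d + 1, n, hn, μ => by
    rw [Umod_succ hτ hn, U_succ hτ hn]
    split_ifs
    · exact bellman_nonneg
    · exact bellman_le_bellman hγ0 (Umod_nonneg hγ1 d _) (Umod_le_U d (by linarith))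
        (integrable_U hγ0 hγ1 hτ d (by linarith) _ _)

theorem monotone_Umod : ∀ d {n}, 0 < n → Monotone (Umod γ τ lam μa d n)
  | 0, n, hn => fun x y hxy => by
    rw [Umod, Umod]
    split_ifs with hx hy hy
    · exact le_rfl
    · exact U_nonneg (τ := τ) hγ1 0 n y
    · exact absurd (hxy.trans_lt hy) hx
    · exact monotone_U hγ0 hγ1 hτ 0 hn hxy
  | d + 1, n, hn => fun x y hxy => by
    rw [Umod_succ hτ hn, Umod_succ hτ hn]
    split_ifs with hx hy hy
    · exact le_rfl
    · exact bellman_nonneg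
    · exact absurd (hxy.trans_lt hy) hx
    · refine monotone_bellman hγ0 (monotone_Umod d (by linarith)) (fun μ => ?_) hxy
      exact (monotone_Umod d (by linarith)).integrable_comp_add_mul_of_le (Umod_nonneg hγ1 d _)
        (Umod_le_U hγ0 hγ1 hτ d (by linarith)) (integrable_U hγ0 hγ1 hτ d (by linarith) _ _)

theorem U_sub_Umod_le {na : ℝ} (hna : 0 < na) {D d : ℕ} (hd : d ≤ D) (hn : na ≤ n) (μ : ℝ) :
    U γ τ lam d n μ - Umod γ τ lam μa d n μ
      ≤ (if μ < μa then 1 else γ) * U γ τ lam D na μa := by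
  have hε := U_nonneg (τ := τ) (lam := lam) hγ1 D na μa
  induction d generalizing n μ with
  | zero =>
    split_ifs with hμ
    · rw [Umod_of_lt hμ, sub_zero, one_mul]
      exact U_le_U_of_le hγ0 hγ1 hτ hna hn hd hμ.le
    · rw [Umod, if_neg hμ, U, sub_self]
      positivity
  | succ d ih =>
    split_ifs with hμ
    · rw [Umod_of_lt hμ, sub_zero, one_mul]
      exact U_le_U_of_le hγ0 hγ1 hτ hna hn hd hμ.le
    have hn0 : 0 < n := hna.trans_le hn
    rw [U_succ hτ hn0, Umod_succ hτ hn0, if_neg hμ]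
    refine bellman_sub_bellman_le hγ0 hε ?_ (integrable_U hγ0 hγ1 hτ d (by linarith) _ _)
      fun x => (ih (by omega) (by linarith) x).trans ?_
    · exact (monotone_Umod hγ0 hγ1 hτ d (by linarith)).integrable_comp_add_mul_of_le
        (Umod_nonneg hγ1 d _) (Umod_le_U hγ0 hγ1 hτ d (by linarith))
        (integrable_U hγ0 hγ1 hτ d (by linarith) _ _)
    · split_ifs <;> nlinarith

end RetiringValueFunction

theorem nmab_retirement_below_initial_mean_general (γ τ lam μa na : ℝ) (N : ℕ)
    (hγ0 : 0 ≤ γ) (hγ1 : γ < 1) (hτ : 0 < τ) (hna : 0 < na) :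
    U γ τ lam N na μa = 0 ↔ Umod γ τ lam μa N na μa = 0 := by
  have hU : 0 ≤ U γ τ lam N na μa := U_nonneg hγ1 N na μa
  have hUmod : 0 ≤ Umod γ τ lam μa N na μa := Umod_nonneg hγ1 N na μa
  have hle : Umod γ τ lam μa N na μa ≤ U γ τ lam N na μa := Umod_le_U hγ0 hγ1 hτ N hna μa
  have hgap : U γ τ lam N na μa - Umod γ τ lam μa N na μa ≤ γ * U γ τ lam N na μa := by
    simpa using U_sub_Umod_le (lam := lam) (μa := μa) hγ0 hγ1 hτ hna le_rfl le_rfl μa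
  constructor <;> intro h <;> nlinarith

/-- Retirement below the initial mean loses nothing: for the Gaussian
one-armed bandit with initial state `(μ_a, n_a)` and horizon `N ≥ 1`, the
value at the initial state is zero for the original dynamic programme if and
only if it is zero for the programme modified to retire whenever the posterior
mean is strictly below `μ_a`. Hence both calibrations give the same Gittins
index. -/
theorem nmab_retirement_below_initial_mean (γ τ lam μa na : ℝ) (N : ℕ)
    (hγ0 : 0 ≤ γ) (hγ1 : γ < 1) (hτ : 0 < τ) (hna : 0 < na) (hN : 1 ≤ N) :
    U γ τ lam N na μa = 0 ↔ Umod γ τ lam μa N na μa = 0 :=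
  nmab_retirement_below_initial_mean_general γ τ lam μa na N hγ0 hγ1 hτ hna
end
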